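/- arXiv:1107.0360 — 3 statements merged into one kernel-verified Lean document; each statement's English description precedes it below -/
import Mathlib

section
/- Let f : ℝⁿ → ℝ and c : ℝⁿ → ℝᵐ be continuous. Let N denote the set of all local constrained minimizers of the problem (minimize f(x) subject to c(x) ≥ 0) having common objective value f*, and assume N is nonempty. Assume N* ⊆ N is a nonempty compact set that is an isolated subset of N. Then there exists a compact set S ⊆ ℝⁿ such that N* lies in int(S) ∩ F, such that every feasible point x̄ ∈ S with x̄ ∉ N* satisfies f(x̄) > f*, and such that every point x* ∈ N* satisfies f(x*) = f* = min{ f(x) : x ∈ S ∩ F }. -/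
open Set Filter Topology

/-- Theorem on isolated compact sets of local constrained minimizers:
existence of a compact set `S` isolating `N*` on which `f* ` is the minimum
of `f` over `S ∩ F`. -/
theorem barrier_isolated_minimizer_set
    (n m : ℕ)
    (f : EuclideanSpace ℝ (Fin n) → ℝ)
    (c : EuclideanSpace ℝ (Fin n) → Fin m → ℝ)
    (hf : Continuous f) (hc : Continuous c)
    -- the feasible region
    (F : Set (EuclideanSpace ℝ (Fin n)))
    (hF : F = {x | ∀ i, 0 ≤ c x i})
    -- the set of local constrained minimizers with common objective value f*
    (fstar : ℝ)
    (N : Set (EuclideanSpace ℝ (Fin n)))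
    (hN : N = {x | x ∈ F ∧ IsLocalMinOn f F x ∧ f x = fstar})
    (hNne : N.Nonempty)
    -- N* is a nonempty compact isolated subset of N
    (Nstar : Set (EuclideanSpace ℝ (Fin n)))
    (hsub : Nstar ⊆ N) (hNstarNe : Nstar.Nonempty) (hcpt : IsCompact Nstar)
    (hiso : ∃ E : Set (EuclideanSpace ℝ (Fin n)),
      IsOpen E ∧ Nstar ⊆ E ∧ closure E ∩ N = Nstar) :
    ∃ S : Set (EuclideanSpace ℝ (Fin n)), IsCompact S ∧
      Nstar ⊆ interior S ∩ F ∧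
      (∀ x ∈ S ∩ F, x ∉ Nstar → fstar < f x) ∧
      (∀ xstar ∈ Nstar, f xstar = fstar ∧ ∀ y ∈ S ∩ F, f xstar ≤ f y) := by

  obtain ⟨E, hEopen, hNE, hEN⟩ := hiso
  -- for each x in Nstar pick a good radius
  have key : ∀ x ∈ Nstar, ∃ r > 0, Metric.ball x r ⊆ E ∧
      ∀ y ∈ F, y ∈ Metric.ball x r → fstar ≤ f y := by
    intro x hx
    have hxN : x ∈ N := hsub hx
    rw [hN] at hxN
    obtain ⟨hxF, hmin, hfx⟩ := hxN
    have hmin' : ∀ᶠ y in 𝓝[F] x, f x ≤ f y := hmin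
    rw [eventually_nhdsWithin_iff, Metric.eventually_nhds_iff] at hmin'
    obtain ⟨r1, hr1, h1⟩ := hmin'
    obtain ⟨r2, hr2, h2⟩ := Metric.isOpen_iff.mp hEopen x (hNE hx)
    refine ⟨min r1 r2, lt_min hr1 hr2, ?_, ?_⟩
    · exact (Metric.ball_subset_ball (min_le_right _ _)).trans h2
    · intro y hyF hy
      have : dist y x < r1 := lt_of_lt_of_le (Metric.mem_ball.mp hy) (min_le_left _ _)
      have := h1 this hyF
      linarith [hfx ▸ this]
  choose! r hr hrE hrmin using key
  obtain ⟨t, htN, hcov⟩ := hcpt.elim_nhds_subcover (fun x => Metric.ball x (r x / 3))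
    (fun x hx => Metric.ball_mem_nhds x (by linarith [hr x hx]))
  refine ⟨⋃ x ∈ t, Metric.closedBall x (r x / 3), ?_, ?_, ?_, ?_⟩
  · exact t.finite_toSet.isCompact_biUnion (fun x _ => isCompact_closedBall _ _)
  · intro x hx
    constructor
    · have hsub2 : (⋃ y ∈ t, Metric.ball y (r y / 3)) ⊆
          interior (⋃ y ∈ t, Metric.closedBall y (r y / 3)) :=
        interior_maximal (Set.iUnion₂_mono fun y _ => Metric.ball_subset_closedBall)
          (isOpen_biUnion fun y _ => Metric.isOpen_ball)
      exact hsub2 (hcov hx)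
    · have := hsub hx; rw [hN] at this; exact this.1
  · -- strict inequality off Nstar
    intro x hx hxNs
    obtain ⟨hxS, hxF⟩ := hx
    obtain ⟨i, hit, hxi⟩ := Set.mem_iUnion₂.mp hxS
    have hiNs : i ∈ Nstar := htN i hit
    have hri : 0 < r i := hr i hiNs
    have hdist : dist x i ≤ r i / 3 := Metric.mem_closedBall.mp hxi
    have hxball : x ∈ Metric.ball i (r i) := by
      rw [Metric.mem_ball]; linarith
    have hle : fstar ≤ f x := hrmin i hiNs x hxF hxball
    rcases lt_or_eq_of_le hle with h | h
    · exact h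
    · exfalso
      -- x is a local minimizer, hence in N, hence in Nstar
      apply hxNs
      rw [← hEN]
      constructor
      · exact subset_closure (hrE i hiNs hxball)
      · rw [hN]
        refine ⟨hxF, ?_, h.symm⟩
        rw [IsLocalMinOn, IsMinFilter, eventually_nhdsWithin_iff, Metric.eventually_nhds_iff]
        refine ⟨r i / 3, by linarith, ?_⟩
        intro y hy hyF
        have hyball : y ∈ Metric.ball i (r i) := by
          rw [Metric.mem_ball]
          have := dist_triangle y x i
          linarith
        have := hrmin i hiNs y hyF hyball
        linarith
  · intro xs hxs
    have hxsN := hsub hxs; rw [hN] at hxsN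
    refine ⟨hxsN.2.2, ?_⟩
    intro y hy
    rw [hxsN.2.2]
    obtain ⟨hyS, hyF⟩ := hy
    obtain ⟨i, hit, hyi⟩ := Set.mem_iUnion₂.mp hyS
    have hiNs : i ∈ Nstar := htN i hit
    have hri : 0 < r i := hr i hiNs
    have hdist : dist y i ≤ r i / 3 := Metric.mem_closedBall.mp hyi
    exact hrmin i hiNs y hyF (by rw [Metric.mem_ball]; linarith)
end

section
/- Under the hypotheses of the previous statement, if {x_k} is a convergent subsequence of the barrier minimizers {y_k} (where x_k minimizes B_{μ_k} over strict(F) ∩ S and x_k ∈ strict(F) ∩ int(S)), then lim_{k→∞} f(x_k) = f* and lim_{k→∞} B_{μ_k}(x_k) = f*. -/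
open Set Filter Topology

/-- Along any convergent subsequence `x_k = y (φ k)` of barrier minimizers, both
`f(x_k)` and `B_{μ_k}(x_k)` converge to the optimal value `f*`. -/
theorem barrier_minimizers_value_convergence
    (n m : ℕ)
    (f : EuclideanSpace ℝ (Fin n) → ℝ)
    (c : EuclideanSpace ℝ (Fin n) → Fin m → ℝ)
    (hf : Continuous f) (hc : Continuous c)
    -- the feasible region and its strict interior
    (F strictF : Set (EuclideanSpace ℝ (Fin n)))
    (hF : F = {x | ∀ i, 0 ≤ c x i})
    (hstrictF : strictF = {x | ∀ i, 0 < c x i})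
    -- the set of local constrained minimizers with common objective value f*
    (fstar : ℝ)
    (N : Set (EuclideanSpace ℝ (Fin n)))
    (hN : N = {x | x ∈ F ∧ IsLocalMinOn f F x ∧ f x = fstar})
    -- N* is a nonempty compact isolated subset of N
    (Nstar : Set (EuclideanSpace ℝ (Fin n)))
    (hsub : Nstar ⊆ N) (hNstarNe : Nstar.Nonempty) (hcpt : IsCompact Nstar)
    (hiso : ∃ E : Set (EuclideanSpace ℝ (Fin n)),
      IsOpen E ∧ Nstar ⊆ E ∧ closure E ∩ N = Nstar)
    -- at least one point of N* lies in the closure of strict(F)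
    (hcl : ∃ x ∈ Nstar, x ∈ closure strictF)
    -- the barrier parameters: strictly decreasing positive sequence tending to 0
    (μ : ℕ → ℝ) (hμpos : ∀ k, 0 < μ k) (hμanti : StrictAnti μ)
    (hμ0 : Tendsto μ atTop (𝓝 0))
    -- the logarithmic barrier function
    (B : ℝ → EuclideanSpace ℝ (Fin n) → ℝ)
    (hB : B = fun μ x => f x - μ * ∑ i, Real.log (c x i))
    -- S: compact set isolating N* on which f > f* away from N*
    (S : Set (EuclideanSpace ℝ (Fin n))) (hScpt : IsCompact S)
    (hSN : Nstar ⊆ interior S ∩ F)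
    (hSf : ∀ x ∈ S ∩ F, x ∉ Nstar → fstar < f x)
    -- for all sufficiently large k, y k minimizes B (μ k) over strict(F) ∩ S
    (y : ℕ → EuclideanSpace ℝ (Fin n)) (K : ℕ)
    (hy : ∀ k ≥ K, y k ∈ strictF ∩ interior S ∧
      ∀ x ∈ strictF ∩ S, B (μ k) (y k) ≤ B (μ k) x)
    -- a convergent subsequence {x_k} = {y (φ k)}
    (φ : ℕ → ℕ) (hφ : StrictMono φ) (L : EuclideanSpace ℝ (Fin n))
    (hconv : Tendsto (fun k => y (φ k)) atTop (𝓝 L)) :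
    Tendsto (fun k => f (y (φ k))) atTop (𝓝 fstar) ∧
    Tendsto (fun k => B (μ (φ k)) (y (φ k))) atTop (𝓝 fstar) := by

  subst hB hF hstrictF hN
  obtain ⟨xs, hxsN, hxscl⟩ := hcl
  have hfxs : f xs = fstar := (hsub hxsN).2.2
  have hxsint : xs ∈ interior S := (hSN hxsN).1
  have hyk : ∀ k ≥ K, (y (φ k) ∈ {x | ∀ i, 0 < c x i} ∩ interior S ∧
      ∀ x ∈ {x | ∀ i, 0 < c x i} ∩ S,
        f (y (φ k)) - μ (φ k) * ∑ i, Real.log (c (y (φ k)) i) ≤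
          f x - μ (φ k) * ∑ i, Real.log (c x i)) :=
    fun k hk => hy (φ k) (hk.trans hφ.le_apply)
  have hμ'pos : ∀ k, 0 < μ (φ k) := fun k => hμpos _
  have hμ'0 : Tendsto (fun k => μ (φ k)) atTop (𝓝 0) := hμ0.comp hφ.tendsto_atTop
  have hfx : Tendsto (fun k => f (y (φ k))) atTop (𝓝 (f L)) := (hf.tendsto L).comp hconv
  -- L ∈ S
  have hLS : L ∈ S := by
    refine hScpt.isClosed.mem_of_tendsto hconv ?_
    filter_upwards [eventually_ge_atTop K] with k hk
    exact interior_subset (hyk k hk).1.2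
  -- L is feasible
  have hLF : ∀ i, 0 ≤ c L i := by
    intro i
    have hci : Tendsto (fun k => c (y (φ k)) i) atTop (𝓝 (c L i)) :=
      ((continuous_apply i).tendsto _).comp ((hc.tendsto L).comp hconv)
    refine ge_of_tendsto hci ?_
    filter_upwards [eventually_ge_atTop K] with k hk
    exact ((hyk k hk).1.1 i).le
  -- uniform bound on the logs over S
  obtain ⟨R, hR⟩ := hScpt.exists_bound_of_continuousOn hc.continuousOn
  set C : ℝ := max 0 (Real.log (R + 1)) with hCdef
  have hlogC : ∀ x ∈ S, (∀ i, 0 < c x i) → ∀ i, Real.log (c x i) ≤ C := by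
    intro x hxS hxpos i
    have h0 : |c x i| ≤ ‖c x‖ := by simpa using norm_le_pi_norm (c x) i
    have h1 : c x i ≤ R + 1 := by
      have := hR x hxS
      have := le_abs_self (c x i)
      linarith
    exact (Real.log_le_log (hxpos i) h1).trans (le_max_right _ _)
  have hsumC : ∀ x ∈ S, (∀ i, 0 < c x i) → ∑ i, Real.log (c x i) ≤ m * C := by
    intro x hxS hxpos
    calc ∑ i, Real.log (c x i) ≤ ∑ _i : Fin m, C :=
          Finset.sum_le_sum fun i _ => hlogC x hxS hxpos i
      _ = m * C := by simp [Finset.sum_const, Finset.card_univ, nsmul_eq_mul]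
  -- near-optimal strictly feasible comparison points
  have hz : ∀ ε > 0, ∃ z, (∀ i, 0 < c z i) ∧ z ∈ S ∧ f z < fstar + ε := by
    intro ε hε
    have hU : IsOpen (interior S ∩ f ⁻¹' Iio (fstar + ε)) :=
      isOpen_interior.inter (isOpen_Iio.preimage hf)
    have hxsU : xs ∈ interior S ∩ f ⁻¹' Iio (fstar + ε) :=
      ⟨hxsint, by simp only [mem_preimage, mem_Iio, hfxs]; linarith⟩
    obtain ⟨z, ⟨hz1, hz2⟩, hz3⟩ := mem_closure_iff.mp hxscl _ hU hxsU
    exact ⟨z, hz3, interior_subset hz1, hz2⟩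
  -- f L ≤ fstar
  have hfL_le : f L ≤ fstar := by
    by_contra h
    push_neg at h
    obtain ⟨z, hzpos, hzS, hzf⟩ := hz ((f L - fstar) / 2) (by linarith)
    have hRt : Tendsto (fun k => f z - μ (φ k) * (∑ i, Real.log (c z i))
        + μ (φ k) * (m * C)) atTop (𝓝 (f z)) := by
      have := ((tendsto_const_nhds (x := f z)).sub (hμ'0.mul_const (∑ i, Real.log (c z i)))).add
        (hμ'0.mul_const ((m : ℝ) * C))
      simpa using this
    have hle : f L ≤ f z := by
      refine le_of_tendsto_of_tendsto hfx hRt ?_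
      filter_upwards [eventually_ge_atTop K] with k hk
      have hmin := (hyk k hk).2 z ⟨hzpos, hzS⟩
      have hb := hsumC _ (interior_subset (hyk k hk).1.2) (hyk k hk).1.1
      have := mul_le_mul_of_nonneg_left hb (hμ'pos k).le
      linarith
    linarith
  -- L is in Nstar, hence f L = fstar
  have hLN : L ∈ Nstar := by
    by_contra hLN
    exact absurd (hSf L ⟨hLS, hLF⟩ hLN) (not_lt.mpr hfL_le)
  have hfL : f L = fstar := (hsub hLN).2.2
  -- the barrier term tends to 0
  have hT0 : Tendsto (fun k => μ (φ k) * ∑ i, Real.log (c (y (φ k)) i)) atTop (𝓝 0) := by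
    rw [tendsto_order]
    constructor
    · intro a ha
      obtain ⟨z, hzpos, hzS, hzf⟩ := hz (-a / 2) (by linarith)
      have hRt : Tendsto (fun k => f (y (φ k)) - f z
          + μ (φ k) * ∑ i, Real.log (c z i)) atTop (𝓝 (fstar - f z)) := by
        have := (hfx.sub (tendsto_const_nhds (x := f z))).add
          (hμ'0.mul_const (∑ i, Real.log (c z i)))
        simpa [hfL] using this
      have hgt : a < fstar - f z := by linarith
      filter_upwards [hRt.eventually (eventually_gt_nhds hgt), eventually_ge_atTop K]
        with k hk1 hk2
      have hmin := (hyk k hk2).2 z ⟨hzpos, hzS⟩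
      linarith
    · intro a ha
      have hRt : Tendsto (fun k => μ (φ k) * ((m : ℝ) * C)) atTop (𝓝 0) := by
        simpa using hμ'0.mul_const ((m : ℝ) * C)
      filter_upwards [hRt.eventually (eventually_lt_nhds ha), eventually_ge_atTop K]
        with k hk1 hk2
      have hb := hsumC _ (interior_subset (hyk k hk2).1.2) (hyk k hk2).1.1
      have := mul_le_mul_of_nonneg_left hb (hμ'pos k).le
      linarith
  refine ⟨hfL ▸ hfx, ?_⟩
  have := hfx.sub hT0
  simpa [hfL] using this
end

section
/- Let f : ℝⁿ → ℝ be twice continuously differentiable and let x* > 0 componentwise satisfy ∇f(x*) = 0 and ∇²f(x*) positive definite. Then there exist μ̄ > 0 and a continuously differentiable function x : (0, μ̄) → ℝⁿ such that for every μ ∈ (0, μ̄): x(μ) > 0 componentwise, ∇B_μ(x(μ)) = 0, x(μ) is an unconstrained local minimizer of B_μ, and lim_{μ→0⁺} x(μ) = x*. -/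
/-!
The path is the implicit function of `∇f(x) - μ • x⁻¹ = 0` through `(0, x*)`: the barrier term
carries the factor `μ`, so the `x`-derivative of this equation at `(0, x*)` is the Hessian of `f`,
which is invertible. Positive definiteness of the Hessian is an open condition, so `f` is convex
on a small ball around `x*`; so is `-μ ∑ log xᵢ`, and a critical point of the convex barrier on
that ball is its minimum there.
-/

open Set Filter Topology InnerProductSpace

section Convexity

variable {E : Type*} [NormedAddCommGroup E] [NormedSpace ℝ E] {s : Set E} {g : E → ℝ}

theorem convexOn_of_hasFDerivAt2_nonneg {g' : E → E →L[ℝ] ℝ}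
    {g'' : E → E →L[ℝ] E →L[ℝ] ℝ} (hs : Convex ℝ s)
    (hg : ∀ x ∈ s, HasFDerivAt g (g' x) x) (hg' : ∀ x ∈ s, HasFDerivAt g' (g'' x) x)
    (hg'' : ∀ x ∈ s, ∀ v, 0 ≤ g'' x v v) : ConvexOn ℝ s g := by
  refine ⟨hs, fun x hx y hy a b ha hb hab => ?_⟩
  set γ : ℝ → E := ⇑(AffineMap.lineMap x y : ℝ →ᵃ[ℝ] E)
  have hγs : ∀ t ∈ Icc (0 : ℝ) 1, γ t ∈ s := fun t ht => hs.lineMap_mem hx hy ht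
  have hγ : ∀ t, HasDerivAt γ (y - x) t := fun t => AffineMap.hasDerivAt_lineMap
  have hφ : ∀ t ∈ Icc (0 : ℝ) 1, HasDerivAt (g ∘ γ) (g' (γ t) (y - x)) t := fun t ht =>
    (hg _ (hγs t ht)).comp_hasDerivAt t (hγ t)
  have hφ' : ∀ t ∈ Icc (0 : ℝ) 1,
      HasDerivAt (fun t => g' (γ t) (y - x)) (g'' (γ t) (y - x) (y - x)) t := fun t ht =>
    (ContinuousLinearMap.apply ℝ ℝ (y - x)).hasFDerivAt.comp_hasDerivAt t
      ((hg' _ (hγs t ht)).comp_hasDerivAt t (hγ t))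
  have hconv : ConvexOn ℝ (Icc 0 1) (g ∘ γ) := by
    refine convexOn_of_hasDerivWithinAt2_nonneg (convex_Icc 0 1)
      (fun t ht => (hφ t ht).continuousAt.continuousWithinAt)
      (fun t ht => (hφ t (interior_subset ht)).hasDerivWithinAt)
      (fun t ht => (hφ' t (interior_subset ht)).hasDerivWithinAt)
      (fun t ht => hg'' _ (hγs t (interior_subset ht)) _)
  have := hconv.2 (left_mem_Icc.2 zero_le_one) (right_mem_Icc.2 zero_le_one) ha hb hab
  rw [eq_sub_of_add_eq hab] at this ⊢
  simpa [γ, AffineMap.lineMap_apply_module] using this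

theorem ConvexOn.isMinOn_of_hasFDerivAt_eq_zero {x : E} (hg : ConvexOn ℝ s g) (hx : x ∈ s)
    (hgx : HasFDerivAt g (0 : E →L[ℝ] ℝ) x) : IsMinOn g s x := by
  intro y hy
  have hconv : ConvexOn ℝ (Icc 0 1) (g ∘ AffineMap.lineMap (k := ℝ) x y) :=
    (hg.comp_affineMap _).subset (fun t ht => hg.1.lineMap_mem hx hy ht) (convex_Icc 0 1)
  have hderiv : HasDerivAt (g ∘ AffineMap.lineMap (k := ℝ) x y) 0 0 := by
    simpa using hgx.comp_hasDerivAt_of_eq (x := (0 : ℝ)) AffineMap.hasDerivAt_lineMap (by simp)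
  have := hconv.le_slope_of_hasDerivAt (left_mem_Icc.2 zero_le_one)
    (right_mem_Icc.2 zero_le_one) zero_lt_one hderiv
  simpa [slope_def_field] using this

end Convexity

theorem ContinuousAt.eventually_forall_apply_self_nonneg {X E : Type*} [TopologicalSpace X]
    [NormedAddCommGroup E] [NormedSpace ℝ E] [FiniteDimensional ℝ E]
    {H : X → E →L[ℝ] E →L[ℝ] ℝ} {x : X} (hH : ContinuousAt H x)
    (hx : ∀ v ≠ 0, 0 < H x v v) : ∀ᶠ y in 𝓝 x, ∀ v, 0 ≤ H y v v := by
  have hsphere : ∀ᶠ y in 𝓝 x, ∀ u ∈ Metric.sphere (0 : E) 1, 0 < H y u u := by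
    refine (isCompact_sphere 0 1).eventually_forall_of_forall_eventually fun u hu => ?_
    have hcont : ContinuousAt (fun z : X × E => H z.1 z.2 z.2) (x, u) :=
      ((hH.comp continuousAt_fst).clm_apply continuousAt_snd).clm_apply continuousAt_snd
    exact hcont.eventually (lt_mem_nhds (hx u (ne_zero_of_mem_unit_sphere ⟨u, hu⟩)))
  filter_upwards [hsphere] with y hy v
  rcases eq_or_ne v 0 with rfl | hv
  · simp
  have hscale : H y v v = ‖v‖ ^ 2 * H y (‖v‖⁻¹ • v) (‖v‖⁻¹ • v) := by
    simp only [map_smul, smul_apply, smul_eq_mul]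
    field_simp
  rw [hscale]
  exact mul_nonneg (sq_nonneg _) (hy _ (by simp [norm_smul, hv])).le

theorem isInvertible_fderiv_gradient {E : Type*} [NormedAddCommGroup E] [InnerProductSpace ℝ E]
    [FiniteDimensional ℝ E] {f : E → ℝ} {x : E}
    (hx : ∀ v ≠ 0, 0 < fderiv ℝ (fderiv ℝ f) x v v) : (fderiv ℝ (gradient f) x).IsInvertible := by
  have hinner (v : E) : ⟪fderiv ℝ (gradient f) x v, v⟫_ℝ = fderiv ℝ (fderiv ℝ f) x v v := by
    change ⟪fderiv ℝ ((toDual ℝ E).symm ∘ fderiv ℝ f) x v, v⟫_ℝ = _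
    rw [LinearIsometryEquiv.comp_fderiv]
    exact toDual_symm_apply
  have hinj : Function.Injective (fderiv ℝ (gradient f) x) := by
    refine (injective_iff_map_eq_zero _).2 fun v hv => ?_
    by_contra hne
    simpa [← hinner, hv] using hx v hne
  exact ⟨(LinearEquiv.ofInjectiveEndo _ hinj).toContinuousLinearEquiv, rfl⟩

section Barrier

variable {ι : Type*} [Fintype ι]

noncomputable def invCoords (x : EuclideanSpace ℝ ι) : EuclideanSpace ℝ ι :=
  WithLp.toLp 2 fun i => (x i)⁻¹

theorem contDiffAt_invCoords {x : EuclideanSpace ℝ ι} (hx : ∀ i, x i ≠ 0) {k : WithTop ℕ∞} :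
    ContDiffAt ℝ k invCoords x :=
  (contDiffAt_piLp 2).2 fun i =>
    ((EuclideanSpace.proj (𝕜 := ℝ) i).contDiff.contDiffAt (x := x)).inv (hx i)

theorem hasGradientAt_sum_log {x : EuclideanSpace ℝ ι} (hx : ∀ i, x i ≠ 0) :
    HasGradientAt (fun y : EuclideanSpace ℝ ι => ∑ i, Real.log (y i)) (invCoords x) x := by
  rw [hasGradientAt_iff_hasFDerivAt]
  have hlog (i : ι) : HasFDerivAt (fun y : EuclideanSpace ℝ ι => Real.log (y i))
      ((x i)⁻¹ • (EuclideanSpace.proj i : EuclideanSpace ℝ ι →L[ℝ] ℝ)) x :=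
    (EuclideanSpace.proj i).hasFDerivAt.log (hx i)
  refine (HasFDerivAt.fun_sum fun i (_ : i ∈ Finset.univ) => hlog i).congr_fderiv ?_
  ext v
  simp [invCoords, PiLp.inner_apply, mul_comm]

theorem hasGradientAt_barrier {f : EuclideanSpace ℝ ι → ℝ} {x : EuclideanSpace ℝ ι}
    (hf : DifferentiableAt ℝ f x) (hx : ∀ i, x i ≠ 0) (μ : ℝ) :
    HasGradientAt (fun y => f y - μ * ∑ i, Real.log (y i))
      (gradient f x - μ • invCoords x) x := by
  rw [hasGradientAt_iff_hasFDerivAt, map_sub, map_smul, toDual_gradient]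
  exact hf.hasFDerivAt.sub
    ((hasGradientAt_iff_hasFDerivAt.1 (hasGradientAt_sum_log hx)).const_mul μ)

theorem concaveOn_sum_log :
    ConcaveOn ℝ {x : EuclideanSpace ℝ ι | ∀ i, 0 < x i} fun x => ∑ i, Real.log (x i) := by
  have hlog := strictConcaveOn_log_Ioi.concaveOn
  refine ⟨fun x hx y hy a b ha hb hab i => hlog.1 (hx i) (hy i) ha hb hab,
    fun x hx y hy a b ha hb hab => ?_⟩
  simp only [smul_eq_mul, Finset.mul_sum, ← Finset.sum_add_distrib, PiLp.add_apply,
    PiLp.smul_apply]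
  exact Finset.sum_le_sum fun i _ => hlog.2 (hx i) (hy i) ha hb hab

theorem exists_contDiffAt_barrier_critical_path {f : EuclideanSpace ℝ ι → ℝ}
    {x₀ : EuclideanSpace ℝ ι} (hf : ContDiff ℝ 2 f) (hx₀ : ∀ i, x₀ i ≠ 0)
    (hgrad : gradient f x₀ = 0) (hpd : ∀ v ≠ 0, 0 < fderiv ℝ (fderiv ℝ f) x₀ v v) :
    ∃ X : ℝ → EuclideanSpace ℝ ι, X 0 = x₀ ∧ ContDiffAt ℝ 1 X 0 ∧
      ∀ᶠ μ in 𝓝 0, gradient f (X μ) = μ • invCoords (X μ) := by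
  set F : ℝ × EuclideanSpace ℝ ι → EuclideanSpace ℝ ι :=
    fun p => gradient f p.2 - p.1 • invCoords p.2
  have hgrad_contDiff : ContDiff ℝ 1 (gradient f) :=
    (toDual ℝ _).symm.contDiff.comp (hf.fderiv_right (m := 1) le_rfl)
  have hinvCoords : ContDiffAt ℝ 1 (invCoords ∘ Prod.snd) ((0 : ℝ), x₀) :=
    (contDiffAt_invCoords hx₀).comp _ contDiffAt_snd
  have hF : ContDiffAt ℝ 1 F (0, x₀) :=
    (hgrad_contDiff.contDiffAt.comp _ contDiffAt_snd).sub (contDiffAt_fst.smul hinvCoords)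
  have hpartial : fderiv ℝ F (0, x₀) ∘L .inr ℝ ℝ _ = fderiv ℝ (gradient f) x₀ := by
    have hslice : F ∘ (fun y => ((0 : ℝ), y)) = gradient f := by
      funext y
      simp [F]
    have := (hF.differentiableAt one_ne_zero).hasFDerivAt.comp x₀ (hasFDerivAt_prodMk_right 0 x₀)
    rw [hslice] at this
    exact this.fderiv.symm
  have hinv : (fderiv ℝ F (0, x₀) ∘L .inr ℝ ℝ _).IsInvertible :=
    hpartial ▸ isInvertible_fderiv_gradient hpd
  refine ⟨hF.implicitFunction one_ne_zero hinv, hF.implicitFunction_apply_self one_ne_zero hinv,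
    hF.contDiffAt_implicitFunction one_ne_zero hinv, ?_⟩
  filter_upwards [hF.eventually_apply_implicitFunction one_ne_zero hinv] with μ hμ
  simpa [F, hgrad, sub_eq_zero] using hμ

theorem exists_ball_convexOn_barrier {f : EuclideanSpace ℝ ι → ℝ} {x₀ : EuclideanSpace ℝ ι}
    (hf : ContDiff ℝ 2 f) (hx₀ : ∀ i, 0 < x₀ i)
    (hpd : ∀ v ≠ 0, 0 < fderiv ℝ (fderiv ℝ f) x₀ v v) :
    ∃ r > 0, (∀ y ∈ Metric.ball x₀ r, ∀ i, 0 < y i) ∧ ∀ μ, 0 ≤ μ →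
      ConvexOn ℝ (Metric.ball x₀ r) fun y => f y - μ * ∑ i, Real.log (y i) := by
  have hf' : ContDiff ℝ 1 (fderiv ℝ f) := hf.fderiv_right (m := 1) le_rfl
  have hpos : ∀ᶠ y in 𝓝 x₀, ∀ i, 0 < y i := eventually_all.2 fun i =>
    (EuclideanSpace.proj (𝕜 := ℝ) i).continuous.continuousAt.eventually (lt_mem_nhds (hx₀ i))
  have hpsd :=
    (hf'.continuous_fderiv one_ne_zero).continuousAt.eventually_forall_apply_self_nonneg hpd
  obtain ⟨r, hr, hball⟩ := Metric.eventually_nhds_iff_ball.1 (hpos.and hpsd)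
  refine ⟨r, hr, fun y hy => (hball y hy).1, fun μ hμ => ?_⟩
  have hconv : ConvexOn ℝ (Metric.ball x₀ r) f :=
    convexOn_of_hasFDerivAt2_nonneg (convex_ball x₀ r)
      (fun y _ => (hf.differentiable (by norm_num) y).hasFDerivAt)
      (fun y _ => (hf'.differentiable one_ne_zero y).hasFDerivAt) fun y hy => (hball y hy).2
  have hlog : ConcaveOn ℝ (Metric.ball x₀ r) fun y => ∑ i, Real.log (y i) :=
    concaveOn_sum_log.subset (fun y hy => (hball y hy).1) (convex_ball x₀ r)
  exact hconv.sub (hlog.smul hμ)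

end Barrier

/-- For the bound constraint `x ≥ 0`: if `x* > 0` is a stationary point of `f`
with positive definite Hessian, then there is a continuously differentiable
path `μ ↦ x(μ)` of positive unconstrained local minimizers of `B_μ`, defined
for small `μ > 0`, with `∇B_μ(x(μ)) = 0` and `x(μ) → x*` as `μ → 0⁺`. -/
theorem barrier_bound_constraint_trajectory
    (n : ℕ)
    (f : EuclideanSpace ℝ (Fin n) → ℝ)
    (hf : ContDiff ℝ 2 f)
    (xstar : EuclideanSpace ℝ (Fin n))
    (hxstar : ∀ i, 0 < xstar i)
    (hgrad : gradient f xstar = 0)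
    (hhess : ∀ p : EuclideanSpace ℝ (Fin n), p ≠ 0 →
      0 < iteratedFDeriv ℝ 2 f xstar ![p, p])
    -- the logarithmic barrier function for the constraint x ≥ 0
    (B : ℝ → EuclideanSpace ℝ (Fin n) → ℝ)
    (hB : B = fun μ x => f x - μ * ∑ i, Real.log (x i)) :
    ∃ μbar : ℝ, 0 < μbar ∧ ∃ X : ℝ → EuclideanSpace ℝ (Fin n),
      ContDiffOn ℝ 1 X (Ioo 0 μbar) ∧
      (∀ μ ∈ Ioo (0 : ℝ) μbar, (∀ i, 0 < X μ i) ∧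
        gradient (B μ) (X μ) = 0 ∧ IsLocalMin (B μ) (X μ)) ∧
      Tendsto X (𝓝[>] 0) (𝓝 xstar) := by
  subst hB
  have hpd : ∀ v ≠ 0, 0 < fderiv ℝ (fderiv ℝ f) xstar v v := fun v hv => by
    simpa [iteratedFDeriv_two_apply] using hhess v hv
  obtain ⟨X, hX0, hX, hcrit⟩ :=
    exists_contDiffAt_barrier_critical_path hf (fun i => (hxstar i).ne') hgrad hpd
  obtain ⟨r, hr, hpos, hconv⟩ := exists_ball_convexOn_barrier hf hxstar hpd
  have hXball : ∀ᶠ μ in 𝓝 0, X μ ∈ Metric.ball xstar r :=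
    hX.continuousAt.preimage_mem_nhds (hX0 ▸ Metric.ball_mem_nhds xstar hr)
  obtain ⟨μbar, hμbar, hsmall⟩ :=
    Metric.eventually_nhds_iff_ball.1 ((hX.eventually (by simp)).and (hcrit.and hXball))
  have hIoo : Ioo 0 μbar ⊆ Metric.ball 0 μbar := fun μ hμ => by
    simpa [abs_of_pos hμ.1] using hμ.2
  refine ⟨μbar, hμbar, X, fun μ hμ => (hsmall μ (hIoo hμ)).1.contDiffWithinAt,
    fun μ hμ => ?_, hX0 ▸ hX.continuousAt.tendsto.mono_left nhdsWithin_le_nhds⟩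
  obtain ⟨-, hcritμ, hmem⟩ := hsmall μ (hIoo hμ)
  have hgrad0 : HasGradientAt (fun x => f x - μ * ∑ i, Real.log (x i)) 0 (X μ) := by
    simpa [hcritμ] using hasGradientAt_barrier (hf.differentiable (by norm_num) (X μ))
      (fun i => (hpos _ hmem i).ne') μ
  refine ⟨hpos _ hmem, hgrad0.gradient, ?_⟩
  refine ((hconv μ hμ.1.le).isMinOn_of_hasFDerivAt_eq_zero hmem ?_).isLocalMin
    (Metric.isOpen_ball.mem_nhds hmem)
  simpa using hasGradientAt_iff_hasFDerivAt.1 hgrad0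
end
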